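/- arXiv:2007.10592 — 9 statements merged into one kernel-verified Lean document; each statement's English description precedes it below -/
import Mathlib

section
/- If x and x' are binary strings of length n, y is a common subsequence of length n−1 of both (each obtained by deleting one bit), and f1(x) ≡ f1(x') (mod n+1), then x = x'. In other words, the value of f1(x) modulo n+1 together with y determines x uniquely in the single deletion case. -/
open List Finset

def f1 (z : List Bool) : ℕ := ∑ i ∈ Finset.range z.length, (i + 1) * (z.getD i false).toNat

def f2 (z : List Bool) : ℕ := ∑ i ∈ Finset.range z.length, (i + 1).choose 2 * (z.getD i false).toNat

def pad (z : List Bool) : List Bool := (false :: z) ++ [true]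

/-- run number (rank) of position `i` (0-indexed in the padded string). -/
def runRank (z : List Bool) (i : ℕ) : ℕ :=
  ((Finset.range i).filter (fun j => (pad z).getD (j + 1) true ≠ (pad z).getD j true)).card

def f1r (z : List Bool) : ℕ := ∑ i ∈ Finset.Icc 1 (z.length + 1), runRank z i

def f2r (z : List Bool) : ℕ := ∑ i ∈ Finset.Icc 1 (z.length + 1), (runRank z i).choose 2

def numRuns (z : List Bool) : ℕ := runRank z (z.length + 1)


lemma sum_toNat (l : List Bool) :
    ∑ i ∈ Finset.range l.length, (l.getD i false).toNat = l.count true := by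
  induction l with
  | nil => simp
  | cons a l ih =>
      rw [List.length_cons, Finset.sum_range_succ']
      simp only [List.getD_cons_succ, List.getD_cons_zero, ih, List.count_cons]
      cases a <;> simp


lemma f1_cons (a : Bool) (l : List Bool) :
    f1 (a :: l) = a.toNat + f1 l + l.count true := by
  unfold f1
  rw [List.length_cons, Finset.sum_range_succ']
  simp only [List.getD_cons_succ, List.getD_cons_zero]
  have h : ∀ i ∈ Finset.range l.length, (i + 1 + 1) * (l.getD i false).toNat
      = (i + 1) * (l.getD i false).toNat + (l.getD i false).toNat := by
    intro i _; ring
  rw [Finset.sum_congr rfl h, Finset.sum_add_distrib, sum_toNat]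
  ring

lemma f1_insert (b : Bool) :
    ∀ (p : ℕ) (y : List Bool), p ≤ y.length →
    f1 (y.take p ++ b :: y.drop p)
      = f1 y + (p + 1) * b.toNat + (y.drop p).count true := by
  intro p
  induction p with
  | zero => intro y _; simp [f1_cons]; ring
  | succ p ih =>
      intro y hp
      cases y with
      | nil => simp at hp
      | cons a l =>
          simp only [List.take_succ_cons, List.drop_succ_cons, List.cons_append, f1_cons]
          rw [ih l (by simpa using hp)]
          rw [List.count_append, List.count_cons]
          have : l.count true = (l.take p).count true + (l.drop p).count true := by
            conv_lhs => rw [← List.take_append_drop p l, List.count_append]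
          cases b <;> simp <;> omega

lemma sublist_insert : ∀ {y x : List Bool}, y.Sublist x → x.length = y.length + 1 →
    ∃ p ≤ y.length, ∃ b, x = y.take p ++ b :: y.drop p := by
  intro y x h
  induction h with
  | slnil => intro h; simp at h
  | cons a h ih =>
      intro hl
      rename_i l₁ l₂
      have hlen : l₂.length = l₁.length := by simpa using hl
      have heq := h.eq_of_length hlen.symm
      subst heq
      exact ⟨0, Nat.zero_le _, a, by simp⟩
  | cons_cons a h ih =>
      intro hl
      obtain ⟨p, hp, b, hx⟩ := ih (by simpa using hl)
      exact ⟨p + 1, by simpa using Nat.succ_le_succ hp, b, by simp [hx]⟩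

lemma cons_all_eq (b : Bool) (s r : List Bool) (h : ∀ a ∈ s, a = b) :
    b :: (s ++ r) = s ++ b :: r := by
  induction s with
  | nil => rfl
  | cons a s ih =>
      have ha := h a (List.mem_cons_self)
      subst ha
      have := ih (fun a ha => h a (List.mem_cons_of_mem _ ha))
      simp only [List.cons_append]
      rw [← this]

lemma insert_eq_of_val_eq_le (y : List Bool) (p p' : ℕ) (b b' : Bool)
    (hpp : p ≤ p')
    (hval : (p + 1) * b.toNat + (y.drop p).count true
          = (p' + 1) * b'.toNat + (y.drop p').count true) :
    y.take p ++ b :: y.drop p = y.take p' ++ b' :: y.drop p' := by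
  set k := p' - p with hk
  have hp' : p' = p + k := by omega
  set m := y.drop p with hm
  have hdrop : y.drop p' = m.drop k := by
    rw [hm, hp', List.drop_drop]
  have htake : y.take p' = y.take p ++ m.take k := by
    rw [hp', List.take_add]
  have hcnt : m.count true = (m.take k).count true + (m.drop k).count true := by
    conv_lhs => rw [← List.take_append_drop k m, List.count_append]
  have hlen : (m.take k).length ≤ k := by simp [List.length_take]
  have hcle : (m.take k).count true ≤ (m.take k).length := List.count_le_length
  rw [hdrop] at hval
  rw [hdrop, htake, List.append_assoc]
  congr 1
  conv_lhs => rw [← List.take_append_drop k m]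
  cases b <;> cases b' <;> simp only [Bool.toNat_false, Bool.toNat_true, mul_zero, mul_one,
    zero_add, Nat.add_zero] at hval
  · -- false false : count take = 0
    apply cons_all_eq
    intro a ha
    have h0 : (m.take k).count true = 0 := by omega
    cases a with
    | false => rfl
    | true =>
        exfalso
        have h1 : 0 < (m.take k).count true := List.count_pos_iff.mpr ha
        omega
  · -- false true : contradiction
    omega
  · -- true false : contradiction
    omega
  · -- true true : count take = k, length take ≤ k ⇒ all true
    apply cons_all_eq
    intro a ha
    have hck : (m.take k).count true = k := by omega
    have hle : (m.take k).length = (m.take k).count true := by omega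
    have := (List.count_eq_length.mp hle.symm) a ha
    exact this.symm

lemma insert_eq_of_val_eq (y : List Bool) (p p' : ℕ) (b b' : Bool)
    (hval : (p + 1) * b.toNat + (y.drop p).count true
          = (p' + 1) * b'.toNat + (y.drop p').count true) :
    y.take p ++ b :: y.drop p = y.take p' ++ b' :: y.drop p' := by
  rcases le_total p p' with h | h
  · exact insert_eq_of_val_eq_le y p p' b b' h hval
  · exact (insert_eq_of_val_eq_le y p' p b' b h hval.symm).symm

theorem vt_single_deletion_unique (n : ℕ) (x x' y : List Bool)
    (hx : x.length = n) (hx' : x'.length = n) (hy : y.length + 1 = n)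
    (hsub : y.Sublist x) (hsub' : y.Sublist x')
    (hmod : f1 x ≡ f1 x' [MOD n + 1]) :
    x = x' := by
  obtain ⟨p, hp, b, hxe⟩ := sublist_insert hsub (by omega)
  obtain ⟨p', hp', b', hxe'⟩ := sublist_insert hsub' (by omega)
  subst hxe hxe'
  rw [f1_insert b p y hp, f1_insert b' p' y hp'] at hmod
  have hmod2 : (p + 1) * b.toNat + (y.drop p).count true
      ≡ (p' + 1) * b'.toNat + (y.drop p').count true [MOD n + 1] := by
    have h := hmod
    rw [Nat.add_assoc, Nat.add_assoc] at h
    exact Nat.ModEq.add_left_cancel' _ h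
  have hb : ∀ (q : ℕ) (c : Bool), q ≤ y.length →
      (q + 1) * c.toNat + (y.drop q).count true ≤ y.length + 1 := by
    intro q c hq
    have h1 : (y.drop q).count true ≤ (y.drop q).length := List.count_le_length
    have h2 : (y.drop q).length = y.length - q := List.length_drop
    cases c <;> simp <;> omega
  have h1 := hb p b hp
  have h2 := hb p' b' hp'
  have hval : (p + 1) * b.toNat + (y.drop p).count true
      = (p' + 1) * b'.toNat + (y.drop p').count true := by
    have := hmod2
    unfold Nat.ModEq at this
    rw [Nat.mod_eq_of_lt (by omega), Nat.mod_eq_of_lt (by omega)] at this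
    exact this
  exact insert_eq_of_val_eq y p p' b b' hval
end

section
/- Let (a_i) and (a'_i) be two finite sequences of non-negative integers of the same length with Σ a_i = Σ a'_i. Suppose there exists an integer t such that for every index i with a_i < a'_i we have a'_i ≤ t, and for every index i with a_i > a'_i we have a'_i ≥ t. Then, unless the two sequences are equal, Σ a_i(a_i − 1) > Σ a'_i(a'_i − 1). -/
open List Finset

theorem convexity_lemma {ι : Type*} (s : Finset ι) (a a' : ι → ℕ)
    (hsum : ∑ i ∈ s, a i = ∑ i ∈ s, a' i)
    (t : ℤ)
    (hlt : ∀ i ∈ s, a i < a' i → (a' i : ℤ) ≤ t)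
    (hgt : ∀ i ∈ s, a i > a' i → (a' i : ℤ) ≥ t)
    (hne : ¬ ∀ i ∈ s, a i = a' i) :
    ∑ i ∈ s, (a i : ℤ) * ((a i : ℤ) - 1) > ∑ i ∈ s, (a' i : ℤ) * ((a' i : ℤ) - 1) :=  by
  have hz : ∑ i ∈ s, ((a i : ℤ) - (a' i : ℤ)) = 0 := by
    rw [Finset.sum_sub_distrib]
    have := congrArg (fun n : ℕ => (n : ℤ)) hsum
    push_cast at this
    linarith
  set g : ι → ℤ := fun i => ((a i : ℤ) - a' i) * ((a i : ℤ) + a' i - 2 * t) with hg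
  have key : ∑ i ∈ s, (a i : ℤ) * ((a i : ℤ) - 1) - ∑ i ∈ s, (a' i : ℤ) * ((a' i : ℤ) - 1)
      = ∑ i ∈ s, g i + (2 * t - 1) * ∑ i ∈ s, ((a i : ℤ) - (a' i : ℤ)) := by
    rw [Finset.mul_sum, ← Finset.sum_sub_distrib, ← Finset.sum_add_distrib]
    exact Finset.sum_congr rfl (fun i _ => by simp only [hg]; ring)
  have hnonneg : ∀ i ∈ s, 0 ≤ g i := by
    intro i hi
    rcases lt_trichotomy (a i) (a' i) with h | h | h
    · have h1 := hlt i hi h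
      have h2 : (a i : ℤ) < (a' i : ℤ) := by exact_mod_cast h
      simp only [hg]
      nlinarith
    · simp [hg, h]
    · have h1 := hgt i hi h
      have h2 : (a' i : ℤ) < (a i : ℤ) := by exact_mod_cast h
      simp only [hg]
      nlinarith
  have hex : ∃ i ∈ s, 0 < g i := by
    push_neg at hne
    obtain ⟨i, hi, hnei⟩ := hne
    refine ⟨i, hi, ?_⟩
    rcases lt_trichotomy (a i) (a' i) with h | h | h
    · have h1 := hlt i hi h
      have h2 : (a i : ℤ) < (a' i : ℤ) := by exact_mod_cast h
      simp only [hg]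
      nlinarith
    · exact absurd h hnei
    · have h1 := hgt i hi h
      have h2 : (a' i : ℤ) < (a i : ℤ) := by exact_mod_cast h
      simp only [hg]
      nlinarith
  have hpos : 0 < ∑ i ∈ s, g i := Finset.sum_pos' hnonneg hex
  have := key
  rw [hz] at this
  linarith
end

section
/- If y is obtained from x ∈ {0,1}^n by deleting two bits and x' is obtained from y by inserting two 0's at positions giving the same values of f1 and f2 as x, where the two deleted bits of x were both 0's, then x = x'. That is, in the case of two deleted 0's, f1(x) and f2(x) together with y determine x uniquely. -/
open List Finset

lemma count_eq_sum (z : List Bool) : z.count true = ∑ i ∈ Finset.range z.length, (z.getD i false).toNat := by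
  induction z with
  | nil => simp
  | cons b t ih =>
    rw [List.length_cons, Finset.sum_range_succ']
    simp [List.count_cons, ih]
    cases b <;> simp [add_comm]

lemma f1_cons_s9 (b : Bool) (z : List Bool) :
    f1 (b :: z) = b.toNat + (f1 z + z.count true) := by
  rw [f1, List.length_cons, Finset.sum_range_succ']
  simp only [List.getD_cons_succ, List.getD_cons_zero]
  rw [count_eq_sum, f1]
  have h : ∀ i ∈ Finset.range z.length,
      (i + 1 + 1) * (z.getD i false).toNat
        = (i + 1) * (z.getD i false).toNat + (z.getD i false).toNat := by
    intro i _; ring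
  rw [Finset.sum_congr rfl h, Finset.sum_add_distrib]
  ring

lemma f2_cons (b : Bool) (z : List Bool) :
    f2 (b :: z) = f2 z + f1 z := by
  rw [f2, List.length_cons, Finset.sum_range_succ']
  simp only [List.getD_cons_succ, List.getD_cons_zero]
  rw [f1, f2]
  have h : ∀ i ∈ Finset.range z.length,
      (i + 1 + 1).choose 2 * (z.getD i false).toNat
        = (i + 1).choose 2 * (z.getD i false).toNat + (i + 1) * (z.getD i false).toNat := by
    intro i _
    rw [Nat.choose_succ_succ (i + 1) 1, Nat.choose_one_right, add_mul]; ring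
  rw [Finset.sum_congr rfl h, Finset.sum_add_distrib]
  simp


lemma f1_nil : f1 [] = 0 := by simp [f1]
lemma f2_nil : f2 [] = 0 := by simp [f2]

lemma count_insertIdx_false (z : List Bool) (i : ℕ) :
    (z.insertIdx i false).count true = z.count true := by
  induction z generalizing i with
  | nil => cases i <;> simp [List.insertIdx]
  | cons b t ih =>
    cases i with
    | zero => simp
    | succ n => simp [List.insertIdx_succ_cons, List.count_cons, ih]

lemma f1_insertIdx (z : List Bool) (i : ℕ) (h : i ≤ z.length) :
    f1 (z.insertIdx i false) = f1 z + (z.drop i).count true := by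
  induction z generalizing i with
  | nil =>
    obtain rfl : i = 0 := by simpa using h
    simp [f1_cons_s9, f1_nil]
  | cons b t ih =>
    cases i with
    | zero => simp [f1_cons_s9]
    | succ n =>
      simp only [List.insertIdx_succ_cons, f1_cons_s9, List.drop_succ_cons]
      rw [ih n (by simpa using h), count_insertIdx_false]
      ring

def D : List Bool → ℕ → ℕ
  | [], _ => 0
  | b :: t, c => if c ≤ t.count true then D t c + c else f1 (b :: t)

lemma D_saturate (z : List Bool) (c : ℕ) (h : z.count true ≤ c) : D z c = f1 z := by
  induction z with
  | nil => simp [f1_nil, D]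
  | cons b t ih =>
    rw [D]
    split
    · rename_i h2
      have hb : b = false := by
        cases b
        · rfl
        · exfalso; simp [List.count_cons] at h; omega
      have : t.count true = c := by subst hb; simp [List.count_cons] at h; omega
      rw [ih (by omega), f1_cons_s9, hb, this]; simp
    · rfl

lemma D_le_f1 (z : List Bool) (c : ℕ) : D z c ≤ f1 z := by
  induction z generalizing c with
  | nil => simp [D, f1_nil]
  | cons b t ih =>
    rw [D]
    split
    · rename_i h2
      calc D t c + c ≤ f1 t + t.count true := by have := ih c; omega
        _ ≤ f1 (b :: t) := by rw [f1_cons_s9]; omega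
    · exact le_refl _

lemma f2_insertIdx (z : List Bool) (i : ℕ) (h : i ≤ z.length) :
    f2 (z.insertIdx i false) = f2 z + D z ((z.drop i).count true) := by
  induction z generalizing i with
  | nil =>
    obtain rfl : i = 0 := by simpa using h
    simp [f2_cons, f2_nil, f1_nil, D]
  | cons b t ih =>
    cases i with
    | zero =>
      simp only [List.insertIdx_zero, f2_cons, List.drop_zero]
      rw [D_saturate _ _ (le_refl _)]
    | succ n =>
      have hn : n ≤ t.length := by simpa using h
      simp only [List.insertIdx_succ_cons, f2_cons, List.drop_succ_cons]
      rw [ih n hn, f1_insertIdx t n hn, D]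
      rw [if_pos (List.Sublist.count_le true (List.drop_sublist n t))]
      ring

lemma D_insertIdx (z : List Bool) (i : ℕ) (c : ℕ) (h : i ≤ z.length) :
    D (z.insertIdx i false) c = D z c + min c ((z.drop i).count true) := by
  induction z generalizing i with
  | nil =>
    obtain rfl : i = 0 := by simpa using h
    simp [D, f1_cons_s9, f1_nil]
  | cons b t ih =>
    cases i with
    | zero =>
      simp only [List.insertIdx_zero, List.drop_zero]
      rw [D]
      have hc : c ≤ (b :: t).count true ∨ ¬ (c ≤ (b :: t).count true) := em _
      rcases hc with hc | hc
      · rw [if_pos hc, min_eq_left hc]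
      · rw [if_neg hc, f1_cons_s9, D_saturate _ _ (by omega), min_eq_right (by omega)]
        simp
    | succ n =>
      have hn : n ≤ t.length := by simpa using h
      simp only [List.insertIdx_succ_cons, List.drop_succ_cons]
      rw [D, count_insertIdx_false]
      by_cases hc : c ≤ t.count true
      · rw [if_pos hc, ih n hn, D, if_pos hc]; ring
      · rw [if_neg hc, D, if_neg hc, f1_cons_s9, f1_cons_s9, f1_insertIdx t n hn,
          count_insertIdx_false]
        have hdle : (t.drop n).count true ≤ t.count true :=
          List.Sublist.count_le true (List.drop_sublist n t)
        rw [min_eq_right (by omega)]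
        ring


lemma D_mono (z : List Bool) (c : ℕ) : D z c ≤ D z (c + 1) := by
  induction z generalizing c with
  | nil => simp [D]
  | cons b t ih =>
    rw [D, D]
    by_cases h1 : c + 1 ≤ t.count true
    · rw [if_pos (by omega), if_pos h1]
      have := ih c; omega
    · rw [if_neg h1]
      split
      · have h2 : c = t.count true := by omega
        subst h2
        rw [D_saturate t _ (le_refl _), f1_cons_s9]
        omega
      · exact le_refl _

lemma D_concave (z : List Bool) (c : ℕ) :
    D z c + D z (c + 2) ≤ D z (c + 1) + D z (c + 1) := by
  induction z generalizing c with
  | nil => simp [D]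
  | cons b t ih =>
    rw [D, D, D]
    by_cases h2 : c + 2 ≤ t.count true
    · rw [if_pos (show c ≤ t.count true by omega), if_pos h2,
        if_pos (show c + 1 ≤ t.count true by omega)]
      have := ih c; omega
    · rw [if_neg h2]
      by_cases h1 : c + 1 ≤ t.count true
      · -- c + 1 = t.count true
        rw [if_pos (by omega), if_pos h1]
        have hc1 : c + 1 = t.count true := by omega
        have hD1 : D t (c+1) = f1 t := D_saturate t _ (by omega)
        have hDc : D t c ≤ f1 t := D_le_f1 t c
        rw [hD1, f1_cons_s9]
        have hb : b.toNat ≤ 1 := Bool.toNat_le b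
        omega
      · rw [if_neg h1]
        split
        · rename_i h0
          have hc0 : c = t.count true := by omega
          have hD0 : D t c = f1 t := D_saturate t _ (by omega)
          rw [hD0, f1_cons_s9]
          omega
        · omega

lemma D_concave_chain (z : List Bool) (c c' : ℕ) (h : c ≤ c') :
    D z c + D z (c' + 1) ≤ D z (c + 1) + D z c' := by
  induction c' with
  | zero =>
    obtain rfl : c = 0 := by omega
    omega
  | succ n ih =>
    rcases Nat.lt_or_ge c (n + 1) with h2 | h2
    · have ih2 := ih (by omega)
      have hcv := D_concave z n
      have e1 : D z (n + 1 + 1) = D z (n + 2) := by norm_num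
      omega
    · obtain rfl : c = n + 1 := by omega
      omega

-- strict increase step: u + 1 ≤ v → D u + D v + u < D (u+1) + D (v-1) + (u+1)
lemma G_step (z : List Bool) (u v : ℕ) (h : u + 1 ≤ v) :
    D z u + D z v + u < D z (u + 1) + D z (v - 1) + (u + 1) := by
  have h1 := D_concave_chain z u (v - 1) (by omega)
  have h2 : v - 1 + 1 = v := by omega
  rw [h2] at h1
  omega

lemma G_strict (z : List Bool) : ∀ d u v u' v', u' = u + d + 1 → u' ≤ v' → u + v = u' + v' →
    D z u + D z v + u < D z u' + D z v' + u' := by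
  intro d
  induction d with
  | zero =>
    intro u v u' v' h1 h2 h3
    obtain rfl : u' = u + 1 := by omega
    obtain rfl : v = v' + 1 := by omega
    have := G_step z u (v' + 1) (by omega)
    simpa using this
  | succ n ih =>
    intro u v u' v' h1 h2 h3
    have step := G_step z u v (by omega)
    have ihx := ih (u + 1) (v - 1) u' v' (by omega) h2 (by omega)
    omega

lemma D_unique (z : List Bool) (u v u' v' : ℕ) (hu : u ≤ v) (hu' : u' ≤ v')
    (hsum : u + v = u' + v')
    (hD : D z u + D z v + u = D z u' + D z v' + u') : u = u' ∧ v = v' := by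
  rcases lt_trichotomy u u' with h | h | h
  · have := G_strict z (u' - u - 1) u v u' v' (by omega) hu' hsum
    omega
  · omega
  · have := G_strict z (u - u' - 1) u' v' u v (by omega) hu (by omega)
    omega


def rIdx : List Bool → ℕ → ℕ
  | [], _ => 0
  | b :: t, c => if (b :: t).count true ≤ c then 0 else rIdx t c + 1

def insC (z : List Bool) (c : ℕ) : List Bool := z.insertIdx (rIdx z c) false

lemma count_insertIdx_false' (z : List Bool) (i : ℕ) :
    (z.insertIdx i false).count true = z.count true := by
  induction z generalizing i with
  | nil => cases i <;> simp [List.insertIdx]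
  | cons b t ih =>
    cases i with
    | zero => simp
    | succ n => simp [List.insertIdx_succ_cons, List.count_cons, ih]

lemma insert_zeros_prefix (t : List Bool) (n : ℕ) (hn : n ≤ t.length)
    (h : (t.take n).count true = 0) : t.insertIdx n false = false :: t := by
  induction t generalizing n with
  | nil =>
    obtain rfl : n = 0 := by simpa using hn
    rfl
  | cons b t' ih =>
    cases n with
    | zero => simp
    | succ m =>
      have hb : b = false := by
        cases b
        · rfl
        · simp at h
      subst hb
      have h' : (t'.take m).count true = 0 := by
        simpa [List.count_cons] using h
      rw [List.insertIdx_succ_cons, ih m (by simpa using hn) h']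

lemma insert_congr (z : List Bool) (i : ℕ) (h : i ≤ z.length) :
    z.insertIdx i false = insC z ((z.drop i).count true) := by
  induction z generalizing i with
  | nil =>
    obtain rfl : i = 0 := by simpa using h
    rfl
  | cons b t ih =>
    cases i with
    | zero =>
      rw [insC, rIdx, List.drop_zero, if_pos (le_refl _)]
    | succ n =>
      have hn : n ≤ t.length := by simpa using h
      rw [insC, rIdx, List.drop_succ_cons]
      set c := (t.drop n).count true with hc
      have hcle : c ≤ t.count true := List.Sublist.count_le true (List.drop_sublist n t)
      by_cases hk : (b :: t).count true ≤ c
      · rw [if_pos hk]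
        have hb : b = false := by
          cases b
          · rfl
          · exfalso; simp [List.count_cons] at hk; omega
        have hct : t.count true = c := le_antisymm (by simp [hb, List.count_cons] at hk; omega) hcle
        have htake : (t.take n).count true = 0 := by
          have hsplit : (t.take n).count true + (t.drop n).count true = t.count true := by
            rw [← List.count_append, List.take_append_drop]
          omega
        subst hb
        rw [List.insertIdx_succ_cons, insert_zeros_prefix t n hn htake]
        simp
      · rw [if_neg hk, List.insertIdx_succ_cons, List.insertIdx_succ_cons]
        rw [ih n hn, insC]

lemma rIdx_le_length (z : List Bool) (c : ℕ) : rIdx z c ≤ z.length := by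
  induction z with
  | nil => simp [rIdx]
  | cons b t ih =>
    rw [rIdx]
    split
    · simp
    · simpa using ih

lemma count_insC (z : List Bool) (c : ℕ) : (insC z c).count true = z.count true :=
  count_insertIdx_false' z _

lemma insC_swap (z : List Bool) (a b : ℕ) : insC (insC z a) b = insC (insC z b) a := by
  induction z generalizing a b with
  | nil =>
    simp [insC, rIdx, List.insertIdx]
  | cons hd t ih =>
    set k := (hd :: t).count true with hk
    rcases le_or_gt k a with ha | ha <;> rcases le_or_gt k b with hb | hb
    · -- both saturate
      have e1 : insC (hd :: t) a = false :: hd :: t := by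
        rw [insC, rIdx, if_pos ha]; rfl
      have e2 : insC (hd :: t) b = false :: hd :: t := by
        rw [insC, rIdx, if_pos hb]; rfl
      rw [e1, e2]
      have c1 : (false :: hd :: t).count true = k := by simp [hk]
      have e3 : insC (false :: hd :: t) b = false :: false :: hd :: t := by
        rw [insC, rIdx, if_pos (by rw [c1]; exact hb)]; rfl
      have e4 : insC (false :: hd :: t) a = false :: false :: hd :: t := by
        rw [insC, rIdx, if_pos (by rw [c1]; exact ha)]; rfl
      rw [e3, e4]
    · -- a saturates, b < k
      have e1 : insC (hd :: t) a = false :: hd :: t := by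
        rw [insC, rIdx, if_pos ha]; rfl
      rw [e1]
      have c1 : (false :: hd :: t).count true = k := by simp [hk]
      have e2 : insC (false :: hd :: t) b = false :: insC (hd :: t) b := by
        rw [insC, rIdx, if_neg (by rw [c1]; omega), List.insertIdx_succ_cons]; rfl
      rw [e2]
      have c2 : (insC (hd :: t) b).count true = k := count_insC _ _
      have e3 : insC (insC (hd :: t) b) a = false :: insC (hd :: t) b := by
        cases h : insC (hd :: t) b with
        | nil => rfl
        | cons x xs =>
          rw [insC, rIdx, show (x :: xs).count true = k from by rw [← h, c2],
            if_pos ha]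
          simp
      rw [e3]
    · -- b saturates, a < k  (mirror)
      have e1 : insC (hd :: t) b = false :: hd :: t := by
        rw [insC, rIdx, if_pos hb]; rfl
      rw [e1]
      have c1 : (false :: hd :: t).count true = k := by simp [hk]
      have e2 : insC (false :: hd :: t) a = false :: insC (hd :: t) a := by
        rw [insC, rIdx, if_neg (by rw [c1]; omega), List.insertIdx_succ_cons]; rfl
      rw [e2]
      have c2 : (insC (hd :: t) a).count true = k := count_insC _ _
      have e3 : insC (insC (hd :: t) a) b = false :: insC (hd :: t) a := by
        cases h : insC (hd :: t) a with
        | nil => rfl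
        | cons x xs =>
          rw [insC, rIdx, show (x :: xs).count true = k from by rw [← h, c2],
            if_pos hb]
          simp
      rw [e3]
    · -- both < k : peel head
      have hpeel : ∀ c, c < k → insC (hd :: t) c = hd :: insC t c := by
        intro c hc
        rw [insC, rIdx, if_neg (by omega), List.insertIdx_succ_cons]; rfl
      have hpeel2 : ∀ c c', c' < k → insC (hd :: insC t c) c' = hd :: insC (insC t c) c' := by
        intro c c' hc'
        have cc : (hd :: insC t c).count true = k := by
          rw [List.count_cons, count_insC, hk, List.count_cons]
        rw [insC, rIdx, if_neg (show ¬(hd :: insC t c).count true ≤ c' by rw [cc]; omega),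
          List.insertIdx_succ_cons]
        rfl
      rw [hpeel a ha, hpeel b hb, hpeel2 a b hb, hpeel2 b a ha, ih]


lemma length_insert_false (z : List Bool) (i : ℕ) (h : i ≤ z.length) :
    (z.insertIdx i false).length = z.length + 1 := by
  rw [List.length_insertIdx]; simp [h]

lemma key_formulas (y : List Bool) (i j : ℕ) (hi : i ≤ y.length) (hj : j ≤ y.length + 1) :
    ∃ a b : ℕ,
      f1 ((y.insertIdx i false).insertIdx j false) = f1 y + (a + b) ∧
      f2 ((y.insertIdx i false).insertIdx j false) = f2 y + (D y a + D y b + min a b) ∧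
      (y.insertIdx i false).insertIdx j false = insC (insC y a) b := by
  have hlen : (y.insertIdx i false).length = y.length + 1 := length_insert_false y i hi
  have hj' : j ≤ (y.insertIdx i false).length := by omega
  refine ⟨(y.drop i).count true, ((y.insertIdx i false).drop j).count true, ?_, ?_, ?_⟩
  · rw [f1_insertIdx _ j hj', f1_insertIdx y i hi]
    ring
  · rw [f2_insertIdx _ j hj', D_insertIdx y i _ hi, f2_insertIdx y i hi, Nat.min_comm]
    ring
  · rw [insert_congr _ j hj', insert_congr y i hi]

/-- If both `x` and `x'` arise from `y` by inserting two `0`'s, and they share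
the values of `f1` and `f2`, then `x = x'`. -/
theorem two_zero_deletions_unique (y x x' : List Bool)
    (hx : ∃ i j, i ≤ y.length ∧ j ≤ y.length + 1 ∧
      x = (y.insertIdx i false).insertIdx j false)
    (hx' : ∃ i j, i ≤ y.length ∧ j ≤ y.length + 1 ∧
      x' = (y.insertIdx i false).insertIdx j false)
    (hf1 : f1 x = f1 x') (hf2 : f2 x = f2 x') :
    x = x' := by
  obtain ⟨i, j, hi, hj, rfl⟩ := hx
  obtain ⟨i', j', hi', hj', rfl⟩ := hx'
  obtain ⟨a, b, e1, e2, e3⟩ := key_formulas y i j hi hj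
  obtain ⟨a', b', e1', e2', e3'⟩ := key_formulas y i' j' hi' hj'
  rw [e1, e1'] at hf1
  rw [e2, e2'] at hf2
  have hsum : a + b = a' + b' := by omega
  have hDsum : D y a + D y b + min a b = D y a' + D y b' + min a' b' := by omega
  have hmm : min a b = min a' b' ∧ max a b = max a' b' := by
    have h1 : min a b + max a b = a + b := by omega
    have h1' : min a' b' + max a' b' = a' + b' := by omega
    have h2 : D y (min a b) + D y (max a b) = D y a + D y b := by
      rcases le_total a b with h | h
      · rw [min_eq_left h, max_eq_right h]
      · rw [min_eq_right h, max_eq_left h]; ring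
    have h2' : D y (min a' b') + D y (max a' b') = D y a' + D y b' := by
      rcases le_total a' b' with h | h
      · rw [min_eq_left h, max_eq_right h]
      · rw [min_eq_right h, max_eq_left h]; ring
    exact D_unique y (min a b) (max a b) (min a' b') (max a' b')
      (min_le_max) (min_le_max) (by omega) (by omega)
  obtain ⟨hmin, hmax⟩ := hmm
  rw [e3, e3']
  have hcase : (a = a' ∧ b = b') ∨ (a = b' ∧ b = a') := by omega
  rcases hcase with ⟨h1, h2⟩ | ⟨h1, h2⟩
  · rw [h1, h2]
  · rw [h1, h2, insC_swap]
end

section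
/- Suppose two 0's are inserted into a string y, one at position i and one at position j with i < j, and the resulting string x has a prescribed value of f1. If instead the left 0 is moved one elementary move left (past one 1) and the right 0 is moved one elementary move right (past one 1), preserving f1, then f2 strictly decreases. -/
open List Finset

lemma getD_set_self' (z : List Bool) (k : ℕ) (c : Bool) (hk : k < z.length) :
    (z.set k c).getD k false = c := by
  simp [List.getD_eq_getElem?_getD, List.getElem?_set, hk]

lemma getD_set_ne' (z : List Bool) (k i : ℕ) (c : Bool) (h : i ≠ k) :
    (z.set k c).getD i false = z.getD i false := by
  simp [List.getD_eq_getElem?_getD, List.getElem?_set, h.symm]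

lemma sum_set_weight (w : ℕ → ℕ) (z : List Bool) (k : ℕ) (c : Bool) (hk : k < z.length) :
    (∑ i ∈ Finset.range (z.set k c).length, w i * (((z.set k c)).getD i false).toNat)
      + w k * (z.getD k false).toNat
    = (∑ i ∈ Finset.range z.length, w i * (z.getD i false).toNat) + w k * c.toNat := by
  rw [List.length_set]
  have hmem : k ∈ Finset.range z.length := Finset.mem_range.2 hk
  rw [← Finset.sum_erase_add _ (fun i => w i * (((z.set k c)).getD i false).toNat) hmem,
      ← Finset.sum_erase_add _ (fun i => w i * (z.getD i false).toNat) hmem]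
  have he : ∑ i ∈ (Finset.range z.length).erase k, w i * (((z.set k c)).getD i false).toNat
      = ∑ i ∈ (Finset.range z.length).erase k, w i * (z.getD i false).toNat :=
    Finset.sum_congr rfl fun i hi => by rw [getD_set_ne' z k i c (Finset.mem_erase.1 hi).1]
  rw [he, getD_set_self' z k c hk]
  ring

/-- Moving the left inserted `0` (at 0-indexed position `a+1`, past the `1` at
position `a`) one elementary move left, and the right inserted `0` (at position
`b`, past the `1` at position `b+1`) one elementary move right, preserves `f1`
and strictly decreases `f2`. -/
theorem elementary_move_decreases_f2 (x : List Bool) (a b : ℕ)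
    (hab : a + 1 < b) (hb : b + 1 < x.length)
    (ha1 : x.getD a false = true) (ha0 : x.getD (a + 1) false = false)
    (hb0 : x.getD b false = false) (hb1 : x.getD (b + 1) false = true) :
    f1 ((((x.set a false).set (a + 1) true).set b true).set (b + 1) false) = f1 x ∧
    f2 ((((x.set a false).set (a + 1) true).set b true).set (b + 1) false) < f2 x := by
  set z1 := x.set a false with hz1
  set z2 := z1.set (a + 1) true with hz2
  set z3 := z2.set b true with hz3
  have hlen1 : z1.length = x.length := List.length_set ..
  have hlen2 : z2.length = x.length := by rw [hz2, List.length_set, hlen1]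
  have hlen3 : z3.length = x.length := by rw [hz3, List.length_set, hlen2]
  have hka : a < x.length := by omega
  have hka1 : a + 1 < x.length := by omega
  have hkb : b < x.length := by omega
  -- getD facts for intermediate lists
  have g1 : z1.getD (a + 1) false = false := by
    rw [hz1, getD_set_ne' _ _ _ _ (by omega), ha0]
  have g2 : z2.getD b false = false := by
    rw [hz2, getD_set_ne' _ _ _ _ (by omega), hz1, getD_set_ne' _ _ _ _ (by omega), hb0]
  have g3 : z3.getD (b + 1) false = true := by
    rw [hz3, getD_set_ne' _ _ _ _ (by omega), hz2, getD_set_ne' _ _ _ _ (by omega),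
        hz1, getD_set_ne' _ _ _ _ (by omega), hb1]
  have key : ∀ w : ℕ → ℕ,
      (∑ i ∈ Finset.range (z3.set (b+1) false).length, w i * ((z3.set (b+1) false).getD i false).toNat)
        + w (b + 1) + w a
      = (∑ i ∈ Finset.range x.length, w i * (x.getD i false).toNat) + w b + w (a + 1) := by
    intro w
    have h4 := sum_set_weight w z3 (b + 1) false (by omega)
    have h3 := sum_set_weight w z2 b true (by omega)
    have h2 := sum_set_weight w z1 (a + 1) true (by omega)
    have h1 := sum_set_weight w x a false hka
    rw [g3] at h4; rw [g2] at h3; rw [g1] at h2; rw [ha1] at h1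
    simp only [Bool.toNat_true, Bool.toNat_false, Nat.mul_one, Nat.mul_zero, Nat.add_zero] at h4 h3 h2 h1
    rw [← hz1] at h1
    rw [← hz2] at h2
    rw [← hz3] at h3
    omega
  constructor
  · have := key (fun i => i + 1)
    simp only [f1]
    omega
  · have := key (fun i => (i + 1).choose 2)
    have cb : (b + 1 + 1).choose 2 = (b + 1).choose 2 + (b + 1) := by
      simp [Nat.choose_succ_succ (b + 1) 1]; omega
    have ca : (a + 1 + 1).choose 2 = (a + 1).choose 2 + (a + 1) := by
      simp [Nat.choose_succ_succ (a + 1) 1]; omega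
    simp only [f2]
    omega
end

section
/- With the run-sequence convention (pad x with x_0 = 0 and x_{n+1} = 1), inserting a single bit into a string y either leaves the number of runs unchanged or increases it by exactly 2. Consequently, inserting two bits changes the number of runs by 0, 2, or 4. -/
open List Finset

/-- count of adjacent changes in a boolean list -/
def chg : List Bool → ℕ
  | a :: b :: t => (if a ≠ b then 1 else 0) + chg (b :: t)
  | _ => 0

lemma chg_eq_sum (L : List Bool) :
    chg L = ∑ j ∈ Finset.range (L.length - 1),
      (if L.getD (j + 1) true ≠ L.getD j true then 1 else 0) := by
  match L with
  | [] => simp [chg]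
  | [a] => simp [chg]
  | a :: b :: t =>
    rw [chg, chg_eq_sum (b :: t),
      show (a :: b :: t).length - 1 = (b :: t).length - 1 + 1 by simp,
      Finset.sum_range_succ']
    simp only [List.getD_cons_succ, List.getD_cons_zero]
    cases a <;> cases b <;> simp [add_comm]

lemma numRuns_eq_chg (z : List Bool) : numRuns z = chg (pad z) := by
  rw [numRuns, runRank, chg_eq_sum, Finset.card_filter]
  have : (pad z).length - 1 = z.length + 1 := by simp [pad]
  rw [this]

lemma step_lemma (y : List Bool) : ∀ (a c b : Bool) (k : ℕ), k ≤ y.length →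
    chg (a :: (y.insertIdx k b ++ [c])) = chg (a :: (y ++ [c])) ∨
    chg (a :: (y.insertIdx k b ++ [c])) = chg (a :: (y ++ [c])) + 2 := by
  induction y with
  | nil =>
    intro a c b k hk
    have hk0 : k = 0 := by simpa using hk
    subst hk0
    revert a c b; decide
  | cons h t ih =>
    intro a c b k hk
    match k with
    | 0 =>
      simp only [List.insertIdx, List.cons_append]
      show (if a ≠ b then 1 else 0) + ((if b ≠ h then 1 else 0) + chg (h :: (t ++ [c]))) =
          (if a ≠ h then 1 else 0) + chg (h :: (t ++ [c])) ∨ _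
      rcases a <;> rcases b <;> rcases h <;> simp [chg] <;> omega
    | k + 1 =>
      have hk' : k ≤ t.length := by simpa using hk
      have hins : (h :: t).insertIdx (k + 1) b = h :: t.insertIdx k b := by
        simp [List.insertIdx]
      rw [hins]
      have e1 : chg (a :: ((h :: t.insertIdx k b) ++ [c])) =
          (if a ≠ h then 1 else 0) + chg (h :: (t.insertIdx k b ++ [c])) := rfl
      have e2 : chg (a :: ((h :: t) ++ [c])) =
          (if a ≠ h then 1 else 0) + chg (h :: (t ++ [c])) := rfl
      rw [e1, e2]
      rcases ih h c b k hk' with h1 | h1 <;> [left; right] <;> omega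

lemma insert_step (y : List Bool) (b : Bool) (k : ℕ) (hk : k ≤ y.length) :
    numRuns (y.insertIdx k b) = numRuns y ∨ numRuns (y.insertIdx k b) = numRuns y + 2 := by
  rw [numRuns_eq_chg, numRuns_eq_chg]
  simp only [pad, List.cons_append]
  exact step_lemma y false true b k hk

theorem insert_runs_change (y : List Bool) (b : Bool) (k : ℕ) (hk : k ≤ y.length) :
    (numRuns (y.insertIdx k b) = numRuns y ∨ numRuns (y.insertIdx k b) = numRuns y + 2) ∧
    (∀ (b' : Bool) (k' : ℕ), k' ≤ (y.insertIdx k b).length →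
      numRuns ((y.insertIdx k b).insertIdx k' b') = numRuns y ∨
      numRuns ((y.insertIdx k b).insertIdx k' b') = numRuns y + 2 ∨
      numRuns ((y.insertIdx k b).insertIdx k' b') = numRuns y + 4) := by
  have h1 := insert_step y b k hk
  refine ⟨h1, fun b' k' hk' => ?_⟩
  have h2 := insert_step (y.insertIdx k b) b' k' hk'
  rcases h1 with h1 | h1 <;> rcases h2 with h2 | h2 <;> omega
end

section
/- If a bit is inserted into a binary string y without creating a new run, and the insertion is into the r-th run of y (using the padding convention), then f1^r of the resulting string equals f1^r(y) + r. -/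
open List Finset

lemma padget0 (y : List Bool) : (pad y).getD 0 true = false := rfl

lemma padgetS (y : List Bool) (n : ℕ) : (pad y).getD (n + 1) true = y.getD n true := by
  show ((y ++ [true]).getD n true) = y.getD n true
  rcases Nat.lt_or_ge n y.length with h | h
  · exact List.getD_append _ _ _ _ h
  · rw [List.getD_append_right _ _ _ _ h, List.getD_eq_default _ _ h]
    rcases Nat.eq_zero_or_pos (n - y.length) with h' | h'
    · rw [h']; rfl
    · rw [List.getD_eq_default]; exact h'

lemma runRank_succ (y : List Bool) (n : ℕ) :
    runRank y (n + 1) = runRank y n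
      + (if (pad y).getD (n + 1) true ≠ (pad y).getD n true then 1 else 0) := by
  simp only [runRank, Finset.card_filter]
  exact Finset.sum_range_succ _ n

/-- Inserting a bit that creates no new run, into the run of rank `r`,
increases `f1r` by exactly `r`. -/
theorem f1r_insert_no_new_run (y : List Bool) (b : Bool) (k : ℕ) (hk : k ≤ y.length)
    (hnorun : numRuns (y.insertIdx k b) = numRuns y) :
    f1r (y.insertIdx k b) = f1r y + runRank (y.insertIdx k b) (k + 1) := by
  set z := y.insertIdx k b with hz
  set m := y.length with hm
  have hzlen : z.length = m + 1 := List.length_insertIdx_of_le_length hk b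
  -- getD facts for z
  have hget_lt : ∀ i < k, z.getD i true = y.getD i true := by
    intro i hi
    have hiy : i < y.length := lt_of_lt_of_le hi hk
    have hiz : i < z.length := by omega
    rw [List.getD_eq_getElem _ _ hiy, List.getD_eq_getElem _ _ hiz]
    exact List.getElem_insertIdx_of_lt hi hiz
  have hget_ge : ∀ i, z.getD (k + i + 1) true = y.getD (k + i) true := by
    intro i
    rcases Nat.lt_or_ge (k + i) y.length with h | h
    · have hiz : k + i + 1 < z.length := by omega
      rw [List.getD_eq_getElem _ _ h, List.getD_eq_getElem _ _ hiz]
      exact List.getElem_insertIdx_add_succ y b k i h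
    · rw [List.getD_eq_default _ _ h, List.getD_eq_default _ _ (by omega)]
  -- pad getD facts
  have K1 : ∀ j ≤ k, (pad z).getD j true = (pad y).getD j true := by
    intro j hj
    cases j with
    | zero => rfl
    | succ n => rw [padgetS, padgetS]; exact hget_lt n (by omega)
  have K3 : ∀ j, (pad z).getD (k + 2 + j) true = (pad y).getD (k + 1 + j) true := by
    intro j
    have h1 : k + 2 + j = (k + j) + 1 + 1 := by ring
    have h2 : k + 1 + j = (k + j) + 1 := by ring
    rw [h1, h2, padgetS, padgetS]
    exact hget_ge j
  -- runRank agreement on the prefix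
  have rr1 : ∀ i ≤ k, runRank z i = runRank y i := by
    intro i hi
    simp only [runRank, Finset.card_filter]
    apply Finset.sum_congr rfl
    intro j hj
    rw [Finset.mem_range] at hj
    rw [K1 j (by omega), K1 (j + 1) (by omega)]
  -- shifted runRank relation
  have rshift : ∀ i, runRank z (k + 2 + i) + runRank y (k + 1)
      = runRank y (k + 1 + i) + runRank z (k + 2) := by
    intro i
    induction i with
    | zero => simp only [Nat.add_zero]; omega
    | succ n ih =>
      have e1 : k + 2 + (n + 1) = (k + 2 + n) + 1 := by ring
      have e2 : k + 1 + (n + 1) = (k + 1 + n) + 1 := by ring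
      rw [e1, e2, runRank_succ z (k + 2 + n), runRank_succ y (k + 1 + n)]
      have e3 : k + 2 + n + 1 = k + 2 + (n + 1) := by ring
      have e4 : k + 1 + n + 1 = k + 1 + (n + 1) := by ring
      rw [e3, e4, K3 (n + 1), K3 n]
      omega
  -- use hnorun to conclude runRank z (k+2) = runRank y (k+1)
  have hD : runRank z (k + 2) = runRank y (k + 1) := by
    have h := rshift (m - k)
    have e1 : k + 2 + (m - k) = m + 2 := by omega
    have e2 : k + 1 + (m - k) = m + 1 := by omega
    rw [e1, e2] at h
    have hz2 : numRuns z = runRank z (m + 2) := by rw [numRuns, hzlen]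
    have hy2 : numRuns y = runRank y (m + 1) := rfl
    rw [hz2, hy2] at hnorun
    omega
  have rshift' : ∀ i, runRank z (k + 2 + i) = runRank y (k + 1 + i) := by
    intro i
    have := rshift i
    omega
  -- now compute the sums
  have hsum : ∀ (w : List Bool) (a c : ℕ), w.length + 1 = a + c →
      f1r w = (∑ i ∈ Finset.range a, runRank w (1 + i))
        + ∑ i ∈ Finset.range c, runRank w (1 + a + i) := by
    intro w a c hac
    rw [f1r, show Finset.Icc 1 (w.length + 1) = Finset.Ico 1 (w.length + 2) from
      (Finset.Ico_add_one_right_eq_Icc 1 (w.length + 1)), Finset.sum_Ico_eq_sum_range]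
    have : w.length + 2 - 1 = a + c := by omega
    rw [this, Finset.sum_range_add]
    congr 1
    apply Finset.sum_congr rfl
    intro i _
    congr 1
    ring
  have hzsum := hsum z (k + 1) (m - k + 1) (by omega)
  have hysum := hsum y k (m - k + 1) (by omega)
  rw [hzsum, hysum]
  have t1 : (∑ i ∈ Finset.range (k + 1), runRank z (1 + i))
      = (∑ i ∈ Finset.range k, runRank y (1 + i)) + runRank z (k + 1) := by
    rw [Finset.sum_range_succ]
    have : 1 + k = k + 1 := by ring
    rw [this]
    congr 1
    apply Finset.sum_congr rfl
    intro i hi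
    rw [Finset.mem_range] at hi
    exact rr1 (1 + i) (by omega)
  have t2 : (∑ i ∈ Finset.range (m - k + 1), runRank z (1 + (k + 1) + i))
      = ∑ i ∈ Finset.range (m - k + 1), runRank y (1 + k + i) := by
    apply Finset.sum_congr rfl
    intro i _
    have e1 : 1 + (k + 1) + i = k + 2 + i := by ring
    have e2 : 1 + k + i = k + 1 + i := by ring
    rw [e1, e2]
    exact rshift' i
  rw [t1, t2]
  ring
end

section
/- If y is obtained from x ∈ {0,1}^n by deleting one bit, then f1^r(y) ≤ f1^r(x) ≤ f1^r(y) + 2n + 1. -/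
open List Finset

/-- weighted boundary sum -/
def F : List Bool → ℕ
  | a :: b :: t => (if b ≠ a then t.length + 1 else 0) + F (b :: t)
  | _ => 0

lemma sum_swap' (f : ℕ → ℕ) (N : ℕ) :
    ∑ i ∈ Icc 1 N, ∑ j ∈ range i, f j = ∑ j ∈ range N, (N - j) * f j := by
  induction N with
  | zero => simp
  | succ N ih =>
    rw [Finset.sum_Icc_succ_top (Nat.succ_le_succ (Nat.zero_le N)), ih]
    have h1 : ∑ j ∈ range (N+1), (N + 1 - j) * f j
        = ∑ j ∈ range (N+1), ((N - j) * f j + f j) := by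
      apply Finset.sum_congr rfl
      intro j hj
      simp only [Finset.mem_range] at hj
      have : N + 1 - j = (N - j) + 1 := by omega
      rw [this]; ring
    rw [h1, Finset.sum_add_distrib, Finset.sum_range_succ (fun j => (N - j) * f j)]
    simp

lemma F_eq (w : List Bool) : F w = ∑ j ∈ range (w.length - 1),
    (w.length - 1 - j) * (if w.getD (j+1) true ≠ w.getD j true then 1 else 0) := by
  induction w with
  | nil => simp [F]
  | cons a t ih =>
    cases t with
    | nil => simp [F]
    | cons b t' =>
      have h2 : F (b :: t') = ∑ j ∈ range ((b::t').length - 1),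
          ((a::b::t').length - 1 - (j+1)) *
            (if (a::b::t').getD (j+1+1) true ≠ (a::b::t').getD (j+1) true then 1 else 0) := by
        rw [ih]
        apply Finset.sum_congr rfl
        intro j hj
        simp [List.getD_cons_succ]
      have h3 : (if b ≠ a then t'.length + 1 else 0)
          = ((a::b::t').length - 1 - 0) *
            (if (a::b::t').getD 1 true ≠ (a::b::t').getD 0 true then 1 else 0) := by
        by_cases h : b = a <;> simp [h]
      rw [show (a::b::t').length - 1 = ((b::t').length - 1) + 1 from rfl,
        Finset.sum_range_succ']
      show (if b ≠ a then t'.length + 1 else 0) + F (b :: t') = _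
      rw [h2, h3, Nat.add_comm]
      congr 1

lemma f1r_eq_F (z : List Bool) : f1r z = F (pad z) := by
  have hlen : (pad z).length = z.length + 2 := by simp [pad]
  rw [F_eq, hlen]
  show f1r z = ∑ j ∈ range (z.length + 2 - 1), _
  rw [show z.length + 2 - 1 = z.length + 1 from rfl]
  rw [f1r]
  have : ∀ i, runRank z i = ∑ j ∈ range i,
      (if (pad z).getD (j+1) true ≠ (pad z).getD j true then 1 else 0) := by
    intro i
    simp [runRank, Finset.card_filter]
  simp only [this]
  rw [sum_swap']

lemma del : ∀ {y x : List Bool}, y.Sublist x → x.length = y.length + 1 →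
    ∃ a b c, x = a ++ b :: c ∧ y = a ++ c := by
  intro y x h
  induction h with
  | slnil => intro hl; simp at hl
  | @cons l₁ l₂ a h ih =>
    intro hl
    have : l₁ = l₂ := h.eq_of_length (by simp at hl; omega)
    exact ⟨[], a, l₂, rfl, by simp [this]⟩
  | cons_cons a h ih =>
    intro hl
    obtain ⟨A, b, C, h1, h2⟩ := ih (by simpa using hl)
    exact ⟨a :: A, b, C, by simp [h1], by simp [h2]⟩

lemma F_insert : ∀ (u' : List Bool) (a0 b c0 : Bool) (v' : List Bool),
    F ((a0 :: u') ++ c0 :: v') ≤ F ((a0 :: u') ++ b :: c0 :: v') ∧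
    F ((a0 :: u') ++ b :: c0 :: v') ≤ F ((a0 :: u') ++ c0 :: v') + u'.length + 2 * (v'.length + 1) + 1 := by
  intro u'
  induction u' with
  | nil =>
    intro a0 b c0 v'
    simp only [List.nil_append, List.cons_append, F, List.length_cons]
    cases a0 <;> cases b <;> cases c0 <;> simp <;> try omega
  | cons d u'' ih =>
    intro a0 b c0 v'
    have IH := ih d b c0 v'
    simp only [List.cons_append] at IH ⊢
    show F (a0 :: d :: (u'' ++ c0 :: v')) ≤ F (a0 :: d :: (u'' ++ b :: c0 :: v')) ∧ _
    rw [show F (a0 :: d :: (u'' ++ c0 :: v')) =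
      (if d ≠ a0 then (u'' ++ c0 :: v').length + 1 else 0) + F (d :: (u'' ++ c0 :: v')) from rfl]
    rw [show F (a0 :: d :: (u'' ++ b :: c0 :: v')) =
      (if d ≠ a0 then (u'' ++ b :: c0 :: v').length + 1 else 0) + F (d :: (u'' ++ b :: c0 :: v')) from rfl]
    simp only [List.length_append, List.length_cons]
    by_cases h : d = a0
    · subst h
      simp
      omega
    · simp [h]
      omega

theorem f1r_one_deletion_bounds (n : ℕ) (x y : List Bool)
    (hx : x.length = n) (hy : y.length + 1 = n) (hsub : y.Sublist x) :
    f1r y ≤ f1r x ∧ f1r x ≤ f1r y + 2 * n + 1 := by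
  obtain ⟨a, b, c, h1, h2⟩ := del hsub (by omega)
  have hpx : pad x = (false :: a) ++ b :: (c ++ [true]) := by
    simp [pad, h1]
  have hpy : pad y = (false :: a) ++ (c ++ [true]) := by
    simp [pad, h2]
  have hn : n = a.length + c.length + 1 := by
    rw [← hx, h1]; simp; try omega
  cases c with
  | nil =>
    have K := F_insert a false b true []
    rw [f1r_eq_F, f1r_eq_F, hpx, hpy]
    simp only [List.nil_append] at K hpx hpy ⊢
    simp only [List.length_nil] at K
    constructor
    · exact K.1
    · have := K.2
      simp at hn
      omega
  | cons c0 c' =>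
    have K := F_insert a false b c0 (c' ++ [true])
    rw [f1r_eq_F, f1r_eq_F, hpx, hpy]
    simp only [List.cons_append] at K ⊢
    constructor
    · exact K.1
    · have h2 := K.2
      have : (c' ++ [true]).length = c'.length + 1 := by simp
      simp at hn
      omega
end

section
/- If x and x' are binary strings of length n that both contain y ∈ {0,1}^{n−1} as a subsequence (one deleted bit each), and f1^r(x) ≡ f1^r(x') (mod 2n+2), then x = x'. That is, in the case of one deletion, f1^r(x) mod 2n+2 together with y determines x uniquely. -/
open List Finset

/-! ### auxiliary -/

/-- boundary indicator -/
def dd (z : List Bool) (j : ℕ) : ℕ :=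
  if (pad z).getD (j + 1) true ≠ (pad z).getD j true then 1 else 0

lemma dd_le_one (z : List Bool) (j : ℕ) : dd z j ≤ 1 := by
  unfold dd; split <;> omega

lemma runRank_eq_sum (z : List Bool) (i : ℕ) : runRank z i = ∑ j ∈ Finset.range i, dd z j := by
  unfold runRank dd
  rw [Finset.card_filter]

lemma getD_pad (y : List Bool) (j : ℕ) :
    (pad y).getD j true = if j = 0 then false else if j ≤ y.length then y.getD (j-1) false else true := by
  unfold pad
  match j with
  | 0 => simp
  | (j+1) =>
    simp only [cons_append, getD_cons_succ, Nat.add_sub_cancel]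
    rcases lt_or_ge j y.length with h | h
    · rw [List.getD_append _ _ _ _ h, List.getD_eq_getElem _ _ h, List.getD_eq_getElem _ _ h]
      simp [Nat.succ_le_of_lt h]
    · rw [List.getD_append_right _ _ _ _ h]
      rcases eq_or_lt_of_le h with h2 | h2
      · simp [← h2]
      · have h3 : ¬ (j + 1 ≤ y.length) := by omega
        simp only [if_neg (by omega : ¬ (j+1 = 0)), if_neg h3]
        apply List.getD_eq_default
        simp; omega

def FF (z : List Bool) : ℕ := ∑ j ∈ Finset.range (z.length + 1), (z.length + 1 - j) * dd z j

lemma f1r_eq_FF (z : List Bool) : f1r z = FF z := by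
  unfold f1r FF
  have key : ∀ k : ℕ, ∑ i ∈ Finset.Icc 1 k, runRank z i = ∑ j ∈ Finset.range k, (k - j) * dd z j := by
    intro k
    induction k with
    | zero => simp
    | succ k ih =>
      rw [Finset.sum_Icc_succ_top (by omega : 1 ≤ k+1), ih, Finset.sum_range_succ,
        runRank_eq_sum]
      have : ∀ j ∈ Finset.range k, (k + 1 - j) * dd z j = (k - j) * dd z j + dd z j := by
        intro j hj; simp only [Finset.mem_range] at hj
        have : k + 1 - j = (k - j) + 1 := by omega
        rw [this]; ring
      rw [Finset.sum_congr rfl this, Finset.sum_add_distrib]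
      rw [Finset.sum_range_succ]
      simp [Nat.add_assoc]
  exact key _

lemma runRank_mono (z : List Bool) {i j : ℕ} (h : i ≤ j) : runRank z i ≤ runRank z j := by
  rw [runRank_eq_sum, runRank_eq_sum]
  exact Finset.sum_le_sum_of_subset (Finset.range_subset_range.2 h)

lemma runRank_add_le (z : List Bool) {i j : ℕ} (h : i ≤ j) :
    runRank z j ≤ runRank z i + (j - i) := by
  rw [runRank_eq_sum, runRank_eq_sum]
  rw [← Finset.sum_range_add_sum_Ico _ h]
  have : ∑ l ∈ Finset.Ico i j, dd z l ≤ ∑ _l ∈ Finset.Ico i j, 1 :=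
    Finset.sum_le_sum (fun l _ => dd_le_one z l)
  simp at this; omega

lemma runRank_le (z : List Bool) (i : ℕ) : runRank z i ≤ i := by
  have := runRank_add_le z (Nat.zero_le i)
  simpa [runRank] using this

/-! ### insertion -/

def ins (y : List Bool) (p : ℕ) (b : Bool) : List Bool := y.take p ++ b :: y.drop p

lemma ins_length (y : List Bool) (p : ℕ) (b : Bool) (hp : p ≤ y.length) :
    (ins y p b).length = y.length + 1 := by
  unfold ins; simp; omega

lemma getD_ins_lt (y : List Bool) (p : ℕ) (b : Bool) (hp : p ≤ y.length) {i : ℕ} (hi : i < p) :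
    (ins y p b).getD i false = y.getD i false := by
  unfold ins
  rw [List.getD_append _ _ _ _ (by simp; omega)]
  rcases lt_or_ge i y.length with h | h
  · rw [List.getD_eq_getElem _ _ (by simp; omega), List.getD_eq_getElem _ _ h]
    simp [List.getElem_take]
  · omega

lemma getD_ins_self (y : List Bool) (p : ℕ) (b : Bool) (hp : p ≤ y.length) :
    (ins y p b).getD p false = b := by
  unfold ins
  rw [List.getD_append_right _ _ _ _ (by simp only [List.length_take]; omega)]
  have : p - (y.take p).length = 0 := by simp only [List.length_take]; omega
  rw [this]; simp

lemma getD_ins_gt (y : List Bool) (p : ℕ) (b : Bool) (hp : p ≤ y.length) {i : ℕ} (hi : p < i) :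
    (ins y p b).getD i false = y.getD (i - 1) false := by
  unfold ins
  rw [List.getD_append_right _ _ _ _ (by simp only [List.length_take]; omega)]
  have h1 : (y.take p).length = p := by simp; omega
  rw [h1]
  have h2 : i - p = (i - p - 1) + 1 := by omega
  rw [h2, List.getD_cons_succ]
  rcases lt_or_ge (i-1) y.length with h | h
  · rw [List.getD_eq_getElem _ _ (show i - p - 1 < (y.drop p).length by simp only [List.length_drop]; omega),
      List.getD_eq_getElem _ _ h]
    have hpi : p + (i - p - 1) = i - 1 := by omega
    simp [List.getElem_drop, hpi]
  · rw [List.getD_eq_default _ _ (by simp; omega), List.getD_eq_default _ _ h]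

lemma pad_ins_le (y : List Bool) (p : ℕ) (b : Bool) (hp : p ≤ y.length) {j : ℕ} (hj : j ≤ p) :
    (pad (ins y p b)).getD j true = (pad y).getD j true := by
  rw [getD_pad, getD_pad, ins_length y p b hp]
  rcases Nat.eq_zero_or_pos j with h0 | h0
  · simp [h0]
  · rw [if_neg (show ¬ (j = 0) by omega), if_neg (show ¬ (j = 0) by omega),
      if_pos (show j ≤ y.length + 1 by omega), if_pos (show j ≤ y.length by omega)]
    exact getD_ins_lt y p b hp (by omega)

lemma pad_ins_self (y : List Bool) (p : ℕ) (b : Bool) (hp : p ≤ y.length) :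
    (pad (ins y p b)).getD (p + 1) true = b := by
  rw [getD_pad, ins_length y p b hp, if_neg (show ¬ (p + 1 = 0) by omega),
    if_pos (show p + 1 ≤ y.length + 1 by omega)]
  simpa using getD_ins_self y p b hp

lemma pad_ins_gt (y : List Bool) (p : ℕ) (b : Bool) (hp : p ≤ y.length) {j : ℕ} (hj : p + 1 ≤ j) :
    (pad (ins y p b)).getD (j + 1) true = (pad y).getD j true := by
  rw [getD_pad, getD_pad, ins_length y p b hp]
  rw [if_neg (show ¬ (j + 1 = 0) by omega)]
  rcases le_or_gt j y.length with h | h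
  · rw [if_pos (show j + 1 ≤ y.length + 1 by omega), if_neg (show ¬ (j = 0) by omega), if_pos h]
    have := getD_ins_gt y p b hp (show p < j by omega)
    simpa using this
  · rw [if_neg (show ¬ (j + 1 ≤ y.length + 1) by omega), if_neg (show ¬ (j = 0) by omega),
      if_neg (show ¬ (j ≤ y.length) by omega)]

lemma FF_insert (y : List Bool) (p : ℕ) (b : Bool) (hp : p ≤ y.length) :
    FF (ins y p b) + (y.length + 1 - p) * dd y p =
      FF y + runRank y p
        + (if b ≠ (pad y).getD p true then y.length + 2 - p else 0)
        + (if (pad y).getD (p + 1) true ≠ b then y.length + 1 - p else 0) := by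
  set m := y.length with hm
  set x := ins y p b with hxdef
  have hddp : dd x p = if b ≠ (pad y).getD p true then 1 else 0 := by
    unfold dd
    rw [pad_ins_self y p b hp, pad_ins_le y p b hp (le_refl p)]
  have hddp1 : dd x (p+1) = if (pad y).getD (p+1) true ≠ b then 1 else 0 := by
    unfold dd
    rw [pad_ins_self y p b hp, pad_ins_gt y p b hp (le_refl (p+1))]
  have hxlen : x.length = m + 1 := ins_length y p b hp
  have h1 : ∑ j ∈ Finset.Ico 0 p, (m+2-j) * dd x j
      = (∑ j ∈ Finset.range p, (m+1-j) * dd y j) + runRank y p := by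
    rw [← Finset.range_eq_Ico, runRank_eq_sum]
    rw [← Finset.sum_add_distrib]
    apply Finset.sum_congr rfl
    intro j hj
    simp only [Finset.mem_range] at hj
    have hdd : dd x j = dd y j := by
      unfold dd
      rw [pad_ins_le y p b hp (by omega), pad_ins_le y p b hp (by omega)]
    rw [hdd]
    have : m + 2 - j = (m + 1 - j) + 1 := by omega
    rw [this]; ring
  have h2 : ∑ j ∈ Finset.Ico p (m+2), (m+2-j) * dd x j
      = (m+2-p) * dd x p + (m+1-p) * dd x (p+1)
        + ∑ i ∈ Finset.range (m - p), (m-p-i) * dd y (p+1+i) := by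
    rw [Finset.sum_eq_sum_Ico_succ_bot (show p < m+2 by omega)]
    rw [Finset.sum_eq_sum_Ico_succ_bot (show p+1 < m+2 by omega)]
    rw [Finset.sum_Ico_eq_sum_range]
    have hcnt : m + 2 - (p + 1 + 1) = m - p := by omega
    rw [hcnt]
    have : ∀ i ∈ Finset.range (m-p), (m+2-(p+1+1+i)) * dd x (p+1+1+i) = (m-p-i) * dd y (p+1+i) := by
      intro i _
      have hdd : dd x (p+1+1+i) = dd y (p+1+i) := by
        unfold dd
        have e : p+1+1+i = (p+1+i)+1 := by omega
        rw [e, pad_ins_gt y p b hp (by omega), pad_ins_gt y p b hp (by omega)]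
      rw [hdd]
      congr 1
      omega
    rw [Finset.sum_congr rfl this]
    have e2 : m + 2 - (p+1) = m + 1 - p := by omega
    rw [e2]; ring
  have hFx : FF x
      = (∑ j ∈ Finset.range p, (m+1-j) * dd y j) + runRank y p
        + ((m+2-p) * dd x p + (m+1-p) * dd x (p+1)
          + ∑ i ∈ Finset.range (m - p), (m-p-i) * dd y (p+1+i)) := by
    unfold FF
    rw [hxlen, Finset.range_eq_Ico,
      ← Finset.sum_Ico_consecutive _ (Nat.zero_le p) (show p ≤ m+1+1 by omega)]
    have e : m + 1 + 1 = m + 2 := by omega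
    rw [e, h1, h2]
  have hFy : FF y
      = (∑ j ∈ Finset.range p, (m+1-j) * dd y j) + (m+1-p) * dd y p
        + ∑ i ∈ Finset.range (m - p), (m-p-i) * dd y (p+1+i) := by
    unfold FF
    rw [Finset.range_eq_Ico,
      ← Finset.sum_Ico_consecutive _ (Nat.zero_le p) (show p ≤ m+1 by omega)]
    have hB : ∑ j ∈ Finset.Ico p (m+1), (m+1-j) * dd y j
        = (m+1-p) * dd y p + ∑ i ∈ Finset.range (m - p), (m-p-i) * dd y (p+1+i) := by
      rw [Finset.sum_eq_sum_Ico_succ_bot (show p < m+1 by omega)]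
      rw [Finset.sum_Ico_eq_sum_range]
      have hcnt : m + 1 - (p + 1) = m - p := by omega
      rw [hcnt]
      congr 1
      apply Finset.sum_congr rfl
      intro i _
      congr 1
      omega
    rw [hB, ← Finset.range_eq_Ico]
    ring
  rw [hFx, hFy, hddp, hddp1]
  split_ifs <;> simp <;> omega

def delta (y : List Bool) (p : ℕ) (b : Bool) : ℕ :=
  if b = (pad y).getD p true then runRank y p
  else if b = (pad y).getD (p+1) true then runRank y p + 1
  else runRank y p + 2 * (y.length - p) + 3

lemma bool_eq_of_ne_ne {a b c : Bool} (h1 : a ≠ c) (h2 : b ≠ c) : a = b := by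
  cases a <;> cases b <;> cases c <;> simp_all

lemma FF_ins_delta (y : List Bool) (p : ℕ) (b : Bool) (hp : p ≤ y.length) :
    FF (ins y p b) = FF y + delta y p b := by
  have h := FF_insert y p b hp
  have hdd : dd y p = if (pad y).getD (p+1) true ≠ (pad y).getD p true then 1 else 0 := rfl
  unfold delta
  by_cases h1 : b = (pad y).getD p true
  · rw [if_pos h1]
    rw [if_neg (not_not_intro h1)] at h
    by_cases h2 : (pad y).getD (p+1) true = b
    · have hdd0 : dd y p = 0 := by rw [hdd, if_neg]; rw [h2, h1]; simp
      rw [if_neg (not_not_intro h2), hdd0] at h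
      omega
    · have hdd1 : dd y p = 1 := by rw [hdd, if_pos]; rw [h1] at h2; exact h2
      rw [if_pos h2, hdd1] at h
      omega
  · rw [if_neg h1]
    rw [if_pos h1] at h
    by_cases h2 : (pad y).getD (p+1) true = b
    · have hdd1 : dd y p = 1 := by
        rw [hdd, if_pos]; rw [h2]; exact h1
      rw [if_pos h2.symm]
      rw [if_neg (not_not_intro h2), hdd1] at h
      omega
    · have hpp : (pad y).getD p true = (pad y).getD (p+1) true :=
        bool_eq_of_ne_ne (fun hh => h1 hh.symm) h2
      have hdd0 : dd y p = 0 := by rw [hdd, if_neg]; rw [hpp]; simp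
      rw [if_neg (fun hh => h2 hh.symm)]
      rw [if_pos h2, hdd0] at h
      omega

lemma ins_step (y : List Bool) (q : ℕ) (b : Bool) (hq : q ≤ y.length)
    (hb : (pad y).getD (q+1) true = b) :
    ins y q b = ins y (q+1) b := by
  rcases eq_or_lt_of_le hq with he | hlt
  · unfold ins
    rw [List.take_of_length_le (by omega), List.take_of_length_le (by omega),
      List.drop_eq_nil_of_le (by omega), List.drop_eq_nil_of_le (by omega)]
  · have hbq : y.getD q false = b := by
      rw [getD_pad, if_neg (show ¬ (q+1=0) by omega), if_pos (show q+1 ≤ y.length by omega)] at hb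
      simpa using hb
    have hb2 : y[q] = b := by rw [List.getD_eq_getElem _ _ hlt] at hbq; exact hbq
    unfold ins
    rw [List.take_succ, List.drop_eq_getElem_cons hlt, List.getElem?_eq_getElem hlt]
    simp [hb2]

lemma ins_run (y : List Bool) (b : Bool) :
    ∀ k q, q + k ≤ y.length + 1 →
      (∀ j, q ≤ j → j < q + k → (pad y).getD (j+1) true = b) →
      ins y q b = ins y (q+k) b := by
  intro k
  induction k with
  | zero => intro q _ _; rfl
  | succ k ih =>
    intro q hqk hcond
    have h1 : ins y q b = ins y (q+1) b :=
      ins_step y q b (by omega) (hcond q (le_refl q) (by omega))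
    rw [h1]
    have h2 := ih (q+1) (by omega) (fun j hj1 hj2 => hcond j (by omega) (by omega))
    rw [h2]
    congr 1
    omega

lemma pad_const (y : List Bool) {q q' : ℕ} (hle : q ≤ q')
    (hrr : runRank y q = runRank y q') :
    ∀ j, q ≤ j → j ≤ q' → (pad y).getD j true = (pad y).getD q true := by
  have hsum : ∑ j ∈ Finset.Ico q q', dd y j = 0 := by
    have h1 := runRank_eq_sum y q'
    rw [← Finset.sum_range_add_sum_Ico _ hle, ← runRank_eq_sum] at h1
    omega
  have hdd0 : ∀ j, q ≤ j → j < q' → dd y j = 0 := by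
    intro j h1 h2
    exact Finset.sum_eq_zero_iff.mp hsum j (Finset.mem_Ico.mpr ⟨h1, h2⟩)
  intro j h1 h2
  induction j, h1 using Nat.le_induction with
  | base => rfl
  | succ j hj ih =>
    have : (pad y).getD (j+1) true = (pad y).getD j true := by
      by_contra hne
      have hd := hdd0 j hj (by omega)
      unfold dd at hd
      rw [if_pos hne] at hd
      exact one_ne_zero hd
    rw [this, ih (by omega)]

lemma match_normalize (y : List Bool) {p : ℕ} {b : Bool} (hp : p ≤ y.length)
    (hmatch : b = (pad y).getD p true ∨ b = (pad y).getD (p+1) true) :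
    ∃ q, q ≤ y.length + 1 ∧ b = (pad y).getD q true ∧ ins y p b = ins y q b ∧
      delta y p b = runRank y q := by
  by_cases h1 : b = (pad y).getD p true
  · exact ⟨p, by omega, h1, rfl, by unfold delta; rw [if_pos h1]⟩
  · have h2 : b = (pad y).getD (p+1) true := hmatch.resolve_left h1
    refine ⟨p+1, by omega, h2, ins_step y p b hp h2.symm, ?_⟩
    have hdd1 : dd y p = 1 := by
      unfold dd; rw [if_pos]; rw [← h2]; exact h1
    have : runRank y (p+1) = runRank y p + 1 := by
      rw [runRank_eq_sum, runRank_eq_sum, Finset.sum_range_succ, hdd1]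
    rw [this]
    unfold delta
    rw [if_neg h1, if_pos h2]

lemma delta_le (y : List Bool) (p : ℕ) (b : Bool) (hp : p ≤ y.length) :
    delta y p b ≤ 2 * y.length + 3 := by
  have h1 := runRank_le y p
  unfold delta
  split_ifs <;> omega

lemma match_match (y : List Bool) {q q' : ℕ} {b b' : Bool}
    (hle : q ≤ q') (hq' : q' ≤ y.length + 1)
    (hb : b = (pad y).getD q true) (hb' : b' = (pad y).getD q' true)
    (hrr : runRank y q = runRank y q') :
    ins y q b = ins y q' b' := by
  have hbb : b' = b := by
    rw [hb, hb']
    exact pad_const y hle hrr q' hle (le_refl q')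
  rw [hbb]
  have := ins_run y b (q' - q) q (by omega) (fun j hj1 hj2 => by
    rw [hb]
    exact pad_const y hle hrr (j+1) (by omega) (by omega))
  rw [this]
  congr 1
  omega

lemma delta_inj (y : List Bool) {p p' : ℕ} {b b' : Bool}
    (hp : p ≤ y.length) (hp' : p' ≤ y.length)
    (h : delta y p b = delta y p' b') : ins y p b = ins y p' b' := by
  by_cases hM : b = (pad y).getD p true ∨ b = (pad y).getD (p+1) true
  · obtain ⟨q, hq, hbq, hinsq, hdq⟩ := match_normalize y hp hM
    by_cases hM' : b' = (pad y).getD p' true ∨ b' = (pad y).getD (p'+1) true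
    · obtain ⟨q', hq', hbq', hinsq', hdq'⟩ := match_normalize y hp' hM'
      rw [hinsq, hinsq']
      rw [hdq, hdq'] at h
      rcases le_total q q' with hle | hle
      · exact match_match y hle hq' hbq hbq' h
      · exact (match_match y hle hq hbq' hbq h.symm).symm
    · push_neg at hM'
      exfalso
      have hd' : delta y p' b' = runRank y p' + 2 * (y.length - p') + 3 := by
        unfold delta; rw [if_neg hM'.1, if_neg hM'.2]
      have h1 : runRank y q ≤ runRank y (y.length + 1) := runRank_mono y hq
      have h2 : runRank y (y.length + 1) ≤ runRank y p' + (y.length + 1 - p') :=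
        runRank_add_le y (by omega)
      rw [hdq, hd'] at h
      omega
  · push_neg at hM
    have hd : delta y p b = runRank y p + 2 * (y.length - p) + 3 := by
      unfold delta; rw [if_neg hM.1, if_neg hM.2]
    by_cases hM' : b' = (pad y).getD p' true ∨ b' = (pad y).getD (p'+1) true
    · obtain ⟨q', hq', hbq', hinsq', hdq'⟩ := match_normalize y hp' hM'
      exfalso
      have h1 : runRank y q' ≤ runRank y (y.length + 1) := runRank_mono y hq'
      have h2 : runRank y (y.length + 1) ≤ runRank y p + (y.length + 1 - p) :=
        runRank_add_le y (by omega)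
      rw [hd, hdq'] at h
      omega
    · push_neg at hM'
      have hd' : delta y p' b' = runRank y p' + 2 * (y.length - p') + 3 := by
        unfold delta; rw [if_neg hM'.1, if_neg hM'.2]
      rw [hd, hd'] at h
      have hpp : p = p' := by
        rcases le_total p p' with hle | hle
        · have h1 := runRank_mono y hle
          have h2 := runRank_add_le y hle
          omega
        · have h1 := runRank_mono y hle
          have h2 := runRank_add_le y hle
          omega
      subst hpp
      have : b = b' := bool_eq_of_ne_ne hM.1 hM'.1
      rw [this]

lemma sublist_rep {y x : List Bool} (hsub : y.Sublist x) (hlen : x.length = y.length + 1) :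
    ∃ p b, p ≤ y.length ∧ x = ins y p b := by
  induction hsub with
  | slnil => simp at hlen
  | cons a hs ih =>
    rename_i l r
    have : l = r := hs.eq_of_length (by simp at hlen; omega)
    subst this
    exact ⟨0, a, by omega, rfl⟩
  | cons_cons a hs ih =>
    rename_i l r
    obtain ⟨p, b, hp, hrep⟩ := ih (by simp at hlen; omega)
    refine ⟨p + 1, b, by simp; omega, ?_⟩
    unfold ins at hrep ⊢
    simp [hrep]

theorem f1r_single_deletion_unique (n : ℕ) (x x' y : List Bool)
    (hx : x.length = n) (hx' : x'.length = n) (hy : y.length + 1 = n)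
    (hsub : y.Sublist x) (hsub' : y.Sublist x')
    (hmod : f1r x ≡ f1r x' [MOD 2 * n + 2]) :
    x = x' := by
  obtain ⟨p, b, hp, hrep⟩ := sublist_rep hsub (by omega)
  obtain ⟨p', b', hp', hrep'⟩ := sublist_rep hsub' (by omega)
  subst hrep hrep'
  rw [f1r_eq_FF, f1r_eq_FF, FF_ins_delta _ _ _ hp, FF_ins_delta _ _ _ hp'] at hmod
  have hcan : delta y p b ≡ delta y p' b' [MOD 2 * n + 2] :=
    Nat.ModEq.add_left_cancel' (FF y) hmod
  have hb1 := delta_le y p b hp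
  have hb2 := delta_le y p' b' hp'
  have heq : delta y p b = delta y p' b' := by
    have h2 := hcan
    unfold Nat.ModEq at h2
    rw [Nat.mod_eq_of_lt (by omega), Nat.mod_eq_of_lt (by omega)] at h2
    exact h2
  exact delta_inj y hp hp' heq
end

section
/- For every n large enough, there exists an injective map from {1, ..., M} with M ≥ 2^{n−1} into the set of binary strings of length n that are regular, i.e., every contiguous substring of length at least 7·log2(n) contains both 00 and 11 as substrings; in particular, the number of regular strings of length n is at least 2^{n−1}. -/
open List Finset

/-- A string is regular if every contiguous substring of length at least
`7 · log₂ n` contains both `00` and `11`. -/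
def Regular (x : List Bool) : Prop :=
  ∀ l : List Bool, l <:+: x → 7 * Real.logb 2 x.length ≤ (l.length : ℝ) →
    ([false, false] <:+: l ∧ [true, true] <:+: l)

def allB : ℕ → Finset (List Bool)
  | 0 => {[]}
  | n+1 => ((Finset.univ : Finset Bool) ×ˢ allB n).image (fun p => p.1 :: p.2)

lemma mem_allB : ∀ {n} {x : List Bool}, x ∈ allB n ↔ x.length = n := by
  intro n
  induction n with
  | zero => intro x; simp [allB, List.length_eq_zero_iff]
  | succ n ih =>
    intro x
    constructor
    · intro hx
      simp only [allB, Finset.mem_image, Finset.mem_product] at hx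
      obtain ⟨⟨b, l⟩, ⟨_, hl⟩, rfl⟩ := hx
      simp [ih.1 hl]
    · intro hx
      match x with
      | b :: l =>
        simp only [allB, Finset.mem_image, Finset.mem_product]
        exact ⟨(b, l), ⟨Finset.mem_univ _, ih.2 (by simpa using hx)⟩, rfl⟩

lemma card_allB (n : ℕ) : (allB n).card = 2 ^ n := by
  induction n with
  | zero => rfl
  | succ n ih =>
    rw [allB, Finset.card_image_of_injective _ (fun a b h => by
      simpa [Prod.ext_iff] using h), Finset.card_product, ih]
    simp [pow_succ]; ring

lemma noPair_card (b : Bool) : ∀ m, ((allB m).filter (fun w => ¬ [b,b] <:+: w)).card ≤ 3 ^ ((m+1)/2) := by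
  intro m
  induction m using Nat.strong_induction_on with
  | _ m ih =>
    match m with
    | 0 =>
      calc ((allB 0).filter _).card ≤ (allB 0).card := Finset.card_filter_le _ _
        _ ≤ 3 ^ ((0+1)/2) := by norm_num [allB]
    | 1 =>
      calc ((allB 1).filter _).card ≤ (allB 1).card := Finset.card_filter_le _ _
        _ ≤ 3 ^ ((1+1)/2) := by
            rw [show (allB 1).card = 2 from ?_]
            · norm_num
            · decide
    | (m+2) =>
      have key : ((allB (m+2)).filter (fun w => ¬ [b,b] <:+: w)).card ≤
          ((Finset.univ.erase ((b,b) : Bool × Bool)) ×ˢ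
            ((allB m).filter (fun w => ¬ [b,b] <:+: w))).card := by
        apply Finset.card_le_card_of_injOn
          (fun w => ((w.headI, w.tail.headI), w.drop 2))
        · intro w hw
          simp only [Finset.mem_coe, Finset.mem_filter] at hw
          obtain ⟨hw1, hw2⟩ := hw
          have hlen : w.length = m + 2 := mem_allB.1 hw1
          match w with
          | c :: d :: t =>
            simp only [Finset.mem_coe, Finset.mem_product, Finset.mem_erase, Finset.mem_filter]
            refine ⟨⟨?_, Finset.mem_univ _⟩, mem_allB.2 (by simpa using hlen), ?_⟩
            · intro h
              apply hw2
              have hc : c = b ∧ d = b := by simpa [Prod.ext_iff] using h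
              exact ⟨[], t, by simp [hc.1, hc.2]⟩
            · intro ht
              exact hw2 (ht.trans ((List.suffix_cons d t).isInfix.trans
                (List.suffix_cons c (d :: t)).isInfix))
        · intro w1 h1 w2 h2 heq
          simp only [Finset.mem_coe, Finset.mem_filter] at h1 h2
          have l1 : w1.length = m + 2 := mem_allB.1 h1.1
          have l2 : w2.length = m + 2 := mem_allB.1 h2.1
          match w1, w2 with
          | c1 :: d1 :: t1, c2 :: d2 :: t2 =>
            have e3 : t1 = t2 := congrArg Prod.snd heq
            have e1 : c1 = c2 := by simpa using congrArg (Prod.fst ∘ Prod.fst) heq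
            have e2 : d1 = d2 := by simpa using congrArg (Prod.snd ∘ Prod.fst) heq
            simp [e1, e2, e3]
      calc ((allB (m+2)).filter (fun w => ¬ [b,b] <:+: w)).card
          ≤ _ := key
        _ = 3 * ((allB m).filter (fun w => ¬ [b,b] <:+: w)).card := by
            rw [Finset.card_product]
            congr 1
            simp
        _ ≤ 3 * 3 ^ ((m+1)/2) := Nat.mul_le_mul_left 3 (ih m (by omega))
        _ = 3 ^ ((m+2+1)/2) := by
            rw [← pow_succ']
            congr 1
            omega

lemma win_card (b : Bool) (p L n : ℕ) (hpL : p + L ≤ n) :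
    ((allB n).filter (fun x => ¬ [b,b] <:+: (x.drop p).take L)).card ≤
      2 ^ p * 3 ^ ((L+1)/2) * 2 ^ (n - p - L) := by
  have key : ((allB n).filter (fun x => ¬ [b,b] <:+: (x.drop p).take L)).card ≤
      ((allB p) ×ˢ (((allB L).filter (fun w => ¬ [b,b] <:+: w)) ×ˢ allB (n - p - L))).card := by
    apply Finset.card_le_card_of_injOn
      (fun x => (x.take p, ((x.drop p).take L, x.drop (p + L))))
    · intro x hx
      simp only [Finset.mem_coe, Finset.mem_filter] at hx
      obtain ⟨hx1, hx2⟩ := hx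
      have hlen : x.length = n := mem_allB.1 hx1
      simp only [Finset.mem_coe, Finset.mem_product, Finset.mem_filter]
      refine ⟨mem_allB.2 ?_, ⟨mem_allB.2 ?_, hx2⟩, mem_allB.2 ?_⟩
      · simp [hlen]; omega
      · simp [hlen]; omega
      · simp [hlen]; omega
    · intro x1 h1 x2 h2 heq
      have e1 : x1.take p = x2.take p := congrArg Prod.fst heq
      have e2 : (x1.drop p).take L = (x2.drop p).take L := congrArg (Prod.fst ∘ Prod.snd) heq
      have e3 : x1.drop (p+L) = x2.drop (p+L) := congrArg (Prod.snd ∘ Prod.snd) heq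
      have recon : ∀ x : List Bool, x = x.take p ++ ((x.drop p).take L ++ x.drop (p+L)) := by
        intro x
        have h4 : x.drop (p+L) = (x.drop p).drop L := by
          rw [List.drop_drop, Nat.add_comm]
        rw [h4, List.take_append_drop, List.take_append_drop]
      rw [recon x1, recon x2, e1, e2, e3]
  calc _ ≤ _ := key
    _ ≤ 2 ^ p * 3 ^ ((L+1)/2) * 2 ^ (n - p - L) := by
      rw [Finset.card_product, Finset.card_product, card_allB, card_allB, mul_assoc]
      exact Nat.mul_le_mul_left _ (Nat.mul_le_mul_right _ (noPair_card b L))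

lemma pow7_le (n L : ℕ) (hn : 2 ≤ n) (hL : 7 * Real.logb 2 n ≤ (L : ℝ)) :
    n ^ 7 ≤ 2 ^ L := by
  have hx : (0:ℝ) < (n:ℝ) ^ (7:ℕ) := by positivity
  have h1 : ((n:ℝ)) ^ (7:ℕ) ≤ (2:ℝ) ^ (L:ℕ) := by
    calc ((n:ℝ)) ^ (7:ℕ) = (2:ℝ) ^ (Real.logb 2 ((n:ℝ) ^ (7:ℕ))) :=
          (Real.rpow_logb (by norm_num) (by norm_num) hx).symm
      _ ≤ (2:ℝ) ^ ((L:ℕ):ℝ) := by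
          apply Real.rpow_le_rpow_of_exponent_le (by norm_num)
          rw [Real.logb_pow]
          push_cast
          linarith
      _ = (2:ℝ) ^ (L:ℕ) := Real.rpow_natCast 2 L
  exact_mod_cast h1

lemma numeric (n L : ℕ) (hn : 131072 ≤ n) (h7 : n ^ 7 ≤ 2 ^ L) :
    4 * n * 3 ^ ((L + 1) / 2) ≤ 2 ^ L := by
  set s := (L + 1) / 2 with hs
  rw [← Nat.pow_le_pow_iff_left (n := 24) (by norm_num)]
  calc (4 * n * 3 ^ s) ^ 24 = 2 ^ 48 * n ^ 24 * 3 ^ (24 * s) := by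
        rw [mul_pow, mul_pow, ← pow_mul, Nat.mul_comm s 24]; norm_num
    _ ≤ 2 ^ 48 * n ^ 24 * 3 ^ (12 * L + 12) := by
        apply Nat.mul_le_mul_left
        apply Nat.pow_le_pow_right (by norm_num)
        omega
    _ ≤ 2 ^ 48 * n ^ 24 * 2 ^ (20 * L + 20) := by
        apply Nat.mul_le_mul_left
        calc (3:ℕ) ^ (12 * L + 12) = (3 ^ 12) ^ (L + 1) := by rw [← pow_mul]; ring_nf
          _ ≤ (2 ^ 20) ^ (L + 1) := Nat.pow_le_pow_left (by norm_num) _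
          _ = 2 ^ (20 * L + 20) := by rw [← pow_mul]; ring_nf
    _ = (2 ^ 68 * n ^ 24) * 2 ^ (20 * L) := by
        rw [pow_add, show (2:ℕ)^68 = 2^48 * 2^20 from by norm_num]; ring
    _ ≤ (n ^ 4 * n ^ 24) * 2 ^ (20 * L) := by
        apply Nat.mul_le_mul_right
        apply Nat.mul_le_mul_right
        calc (2:ℕ) ^ 68 = (2 ^ 17) ^ 4 := by norm_num
          _ ≤ n ^ 4 := Nat.pow_le_pow_left (by omega) 4
    _ = (n ^ 7) ^ 4 * 2 ^ (20 * L) := by rw [← pow_add, ← pow_mul]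
    _ ≤ (2 ^ L) ^ 4 * 2 ^ (20 * L) := Nat.mul_le_mul_right _ (Nat.pow_le_pow_left h7 4)
    _ = (2 ^ L) ^ 24 := by rw [← pow_mul, ← pow_mul, ← pow_add]; ring_nf

theorem encode_into_regular_strings :
    ∃ N : ℕ, ∀ n ≥ N, ∃ M : ℕ, 2 ^ (n - 1) ≤ M ∧
      ∃ f : Fin M → List Bool, Function.Injective f ∧
        ∀ i, (f i).length = n ∧ Regular (f i) := by
  classical
  refine ⟨131072, fun n hn => ?_⟩
  have hn2 : 2 ≤ n := by omega
  set L := ⌈7 * Real.logb 2 (n : ℝ)⌉₊ with hLdef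
  have hL7 : 7 * Real.logb 2 (n : ℝ) ≤ (L : ℝ) := Nat.le_ceil _
  have h2L : n ^ 7 ≤ 2 ^ L := pow7_le n L hn2 hL7
  have hL1 : 1 ≤ L := by
    rw [hLdef]
    rw [Nat.one_le_ceil_iff]
    have : 0 < Real.logb 2 (n : ℝ) :=
      Real.logb_pos (by norm_num) (by exact_mod_cast hn2)
    linarith
  set Bad := (allB n).filter (fun x => ¬ Regular x) with hBaddef
  set Good := (allB n).filter (fun x => Regular x) with hGooddef
  -- key cardinality bound
  have hBadcard : Bad.card ≤ 2 ^ (n - 1) := by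
    rcases Bad.eq_empty_or_nonempty with hB | hB
    · simp [hB]
    · -- from a bad element, L ≤ n
      have extract : ∀ x ∈ Bad, ∃ b : Bool, ∃ p : ℕ, p + L ≤ n ∧
          ¬ [b,b] <:+: (x.drop p).take L := by
        intro x hx
        rw [hBaddef, Finset.mem_filter] at hx
        obtain ⟨hx1, hx2⟩ := hx
        have hlen : x.length = n := mem_allB.1 hx1
        rw [Regular] at hx2
        push_neg at hx2
        obtain ⟨l, hl1, hl2, hl3⟩ := hx2
        rw [hlen] at hl2
        have hLl : L ≤ l.length := Nat.ceil_le.2 hl2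
        obtain ⟨b, hbl⟩ : ∃ b : Bool, ¬ [b,b] <:+: l := by
          by_cases h : [false, false] <:+: l
          · exact ⟨true, hl3 h⟩
          · exact ⟨false, h⟩
        set w := l.take L with hwdef
        have hwlen : w.length = L := by simp [hwdef]; omega
        have hwinf : w <:+: x := (l.take_prefix L).isInfix.trans hl1
        obtain ⟨u, v, huv⟩ := hwinf
        refine ⟨b, u.length, ?_, ?_⟩
        · have := congrArg List.length huv
          simp [hlen, hwlen] at this
          omega
        · have hx_eq : x = u ++ (w ++ v) := by rw [← huv]; simp
          have hmid : (x.drop u.length).take L = w := by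
            rw [hx_eq, List.drop_left, List.take_left' hwlen]
          rw [hmid]
          intro hc
          exact hbl (hc.trans (l.take_prefix L).isInfix)
      obtain ⟨x0, hx0⟩ := hB
      obtain ⟨_, p0, hp0, _⟩ := extract x0 hx0
      have hLn : L ≤ n := by omega
      -- subset of union of windows
      have hsub : Bad ⊆ ((Finset.range (n - L + 1)) ×ˢ (Finset.univ : Finset Bool)).biUnion
          (fun q => (allB n).filter (fun x => ¬ [q.2,q.2] <:+: (x.drop q.1).take L)) := by
        intro x hx
        obtain ⟨b, p, hpL, hbp⟩ := extract x hx
        rw [Finset.mem_biUnion]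
        refine ⟨(p, b), ?_, ?_⟩
        · rw [Finset.mem_product, Finset.mem_range]
          exact ⟨by omega, Finset.mem_univ _⟩
        · rw [Finset.mem_filter]
          rw [hBaddef, Finset.mem_filter] at hx
          exact ⟨hx.1, hbp⟩
      calc Bad.card ≤ _ := Finset.card_le_card hsub
        _ ≤ ∑ q ∈ (Finset.range (n - L + 1)) ×ˢ (Finset.univ : Finset Bool),
              ((allB n).filter (fun x => ¬ [q.2,q.2] <:+: (x.drop q.1).take L)).card :=
            Finset.card_biUnion_le
        _ ≤ ∑ _q ∈ (Finset.range (n - L + 1)) ×ˢ (Finset.univ : Finset Bool),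
              3 ^ ((L+1)/2) * 2 ^ (n - L) := by
            apply Finset.sum_le_sum
            intro q hq
            rw [Finset.mem_product, Finset.mem_range] at hq
            have hpL : q.1 + L ≤ n := by omega
            calc ((allB n).filter (fun x => ¬ [q.2,q.2] <:+: (x.drop q.1).take L)).card
                ≤ 2 ^ q.1 * 3 ^ ((L+1)/2) * 2 ^ (n - q.1 - L) := win_card q.2 q.1 L n hpL
              _ = 3 ^ ((L+1)/2) * 2 ^ (n - L) := by
                  rw [show 2 ^ q.1 * 3 ^ ((L+1)/2) * 2 ^ (n - q.1 - L)
                      = 3 ^ ((L+1)/2) * (2 ^ q.1 * 2 ^ (n - q.1 - L)) from by ring,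
                    ← pow_add]
                  congr 2
                  omega
        _ = (n - L + 1) * 2 * (3 ^ ((L+1)/2) * 2 ^ (n - L)) := by
            rw [Finset.sum_const, Finset.card_product, Finset.card_range]
            simp [mul_comm, mul_assoc, mul_left_comm]
        _ ≤ 2 ^ (n - 1) := by
            have hnum : 4 * n * 3 ^ ((L+1)/2) ≤ 2 ^ L := numeric n L hn h2L
            have key : 2 * ((n - L + 1) * 2 * (3 ^ ((L+1)/2) * 2 ^ (n - L))) ≤ 2 * 2 ^ (n - 1) := by
              calc 2 * ((n - L + 1) * 2 * (3 ^ ((L+1)/2) * 2 ^ (n - L)))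
                  = (4 * (n - L + 1) * 3 ^ ((L+1)/2)) * 2 ^ (n - L) := by ring
                _ ≤ (4 * n * 3 ^ ((L+1)/2)) * 2 ^ (n - L) := by
                    apply Nat.mul_le_mul_right
                    apply Nat.mul_le_mul_right
                    omega
                _ ≤ 2 ^ L * 2 ^ (n - L) := Nat.mul_le_mul_right _ hnum
                _ = 2 ^ n := by rw [← pow_add]; congr 1; omega
                _ = 2 * 2 ^ (n - 1) := by rw [← pow_succ']; congr 1; omega
            omega
  -- assemble
  have hsplit : Good.card + Bad.card = 2 ^ n := by
    rw [hGooddef, hBaddef, Finset.card_filter_add_card_filter_not, card_allB]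
  have hpow : 2 ^ n = 2 ^ (n - 1) + 2 ^ (n - 1) := by
    rw [← two_mul, ← pow_succ']
    congr 1
    omega
  have hGoodcard : 2 ^ (n - 1) ≤ Good.card := by omega
  refine ⟨Good.card, hGoodcard, fun i => (Good.equivFin.symm i : List Bool), ?_, ?_⟩
  · intro i j h
    exact Good.equivFin.symm.injective (Subtype.ext h)
  · intro i
    have hm := (Good.equivFin.symm i).2
    have hm' := Finset.mem_filter.1 hm
    exact ⟨mem_allB.1 hm'.1, hm'.2⟩
end
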